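/- Let α be a totally real algebraic integer of degree d with minimal polynomial P, and let L be an integer such that L + αⱼ > 2 for every real conjugate αⱼ of α. Then the polynomial Q(X) = X^d · P(X + 1/X − L) is a monic palindromic polynomial of degree 2d all of whose complex roots are real. -/

import Mathlib

/-! For `z ≠ 0` we have `Q(z) = z ^ d * P(z + z⁻¹ - L)`, hence `z ^ (2d) * Q(z⁻¹) = Q(z)`: the
polynomial `Q`, of degree `2d`, is palindromic. A root `z` of `Q` is nonzero (`Q(0) = 1`) and
satisfies `z + z⁻¹ = L + αⱼ =: t` for a conjugate `αⱼ`, so `t` is real with `t > 2`. Then `z` is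
a root of `X ^ 2 - t X + 1`, whose discriminant `t ^ 2 - 4` is positive, so `z` is real. -/

open Polynomial

namespace Polynomial

section CommRing

variable {R : Type*} [CommRing R]

/-- `X ^ d * p (X + X⁻¹ - c)` for `d = p.natDegree`, expanded so that it lives in `R[X]`. -/
noncomputable def joukowskyLift (p : R[X]) (c : R) : R[X] :=
  ∑ i ∈ Finset.range (p.natDegree + 1),
    C (p.coeff i) * (X ^ 2 + 1 - C c * X) ^ i * X ^ (p.natDegree - i)

theorem eval_zero_joukowskyLift (p : R[X]) (c : R) :
    (p.joukowskyLift c).eval 0 = p.leadingCoeff := by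
  rw [joukowskyLift, eval_finsetSum, Finset.sum_range_succ, Finset.sum_eq_zero]
  · simp
  · intro i hi
    simp [zero_pow (Nat.sub_ne_zero_of_lt (Finset.mem_range.mp hi))]

variable [Nontrivial R]

theorem natDegree_X_sq_add_one_sub_C_mul_X (c : R) :
    (X ^ 2 + 1 - C c * X : R[X]).natDegree = 2 := by
  compute_degree!

theorem monic_X_sq_add_one_sub_C_mul_X (c : R) : (X ^ 2 + 1 - C c * X : R[X]).Monic := by
  rw [Monic, leadingCoeff, natDegree_X_sq_add_one_sub_C_mul_X]
  compute_degree!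

theorem natDegree_X_sq_add_one_sub_C_mul_X_pow (c : R) (n : ℕ) :
    ((X ^ 2 + 1 - C c * X) ^ n : R[X]).natDegree = 2 * n := by
  rw [(monic_X_sq_add_one_sub_C_mul_X c).natDegree_pow, natDegree_X_sq_add_one_sub_C_mul_X,
    mul_comm]

theorem degree_joukowskyLift_sub_lt {p : R[X]} (hp : p.Monic) (c : R) :
    (p.joukowskyLift c - (X ^ 2 + 1 - C c * X) ^ p.natDegree).degree <
      ((X ^ 2 + 1 - C c * X) ^ p.natDegree).degree := by
  have hterm : ∀ i < p.natDegree,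
      (C (p.coeff i) * (X ^ 2 + 1 - C c * X) ^ i * X ^ (p.natDegree - i)).natDegree
        < 2 * p.natDegree := fun i hi =>
    calc _ ≤ (C (p.coeff i)).natDegree + ((X ^ 2 + 1 - C c * X) ^ i).natDegree
            + (X ^ (p.natDegree - i) : R[X]).natDegree :=
          natDegree_mul_le.trans (by gcongr; exact natDegree_mul_le)
      _ = 2 * i + (p.natDegree - i) := by
          rw [natDegree_C, natDegree_X_sq_add_one_sub_C_mul_X_pow, natDegree_X_pow, zero_add]
      _ < 2 * p.natDegree := by omega
  rw [degree_eq_natDegree ((monic_X_sq_add_one_sub_C_mul_X c).pow _).ne_zero,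
    natDegree_X_sq_add_one_sub_C_mul_X_pow, joukowskyLift, Finset.sum_range_succ,
    hp.coeff_natDegree, map_one, one_mul, Nat.sub_self, pow_zero, mul_one, add_sub_cancel_right]
  refine (degree_sum_le _ _).trans_lt ((Finset.sup_lt_iff (WithBot.bot_lt_coe _)).mpr ?_)
  intro i hi
  exact degree_le_natDegree.trans_lt (by exact_mod_cast hterm i (Finset.mem_range.mp hi))

theorem Monic.joukowskyLift {p : R[X]} (hp : p.Monic) (c : R) : (p.joukowskyLift c).Monic := by
  simpa using ((monic_X_sq_add_one_sub_C_mul_X c).pow p.natDegree).add_of_right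
    (degree_joukowskyLift_sub_lt hp c)

theorem natDegree_joukowskyLift {p : R[X]} (hp : p.Monic) (c : R) :
    (p.joukowskyLift c).natDegree = 2 * p.natDegree := by
  rw [← sub_add_cancel (p.joukowskyLift c) ((X ^ 2 + 1 - C c * X) ^ p.natDegree),
    natDegree_add_eq_right_of_degree_lt (degree_joukowskyLift_sub_lt hp c),
    natDegree_X_sq_add_one_sub_C_mul_X_pow]

end CommRing

section Field

variable {K : Type*} [Field K]

theorem eval_joukowskyLift (p : K[X]) (c : K) {z : K} (hz : z ≠ 0) :
    (p.joukowskyLift c).eval z = z ^ p.natDegree * p.eval (z + z⁻¹ - c) := by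
  rw [joukowskyLift, eval_finsetSum, eval_eq_sum_range, Finset.mul_sum]
  refine Finset.sum_congr rfl fun i hi => ?_
  have hi : i ≤ p.natDegree := Nat.lt_succ_iff.mp (Finset.mem_range.mp hi)
  have hquad : z ^ 2 + 1 - c * z = z * (z + z⁻¹ - c) := by field_simp
  simp only [eval_mul, eval_pow, eval_C, eval_X, eval_sub, eval_add, eval_one]
  rw [hquad, mul_pow, ← Nat.add_sub_cancel' hi, pow_add, Nat.add_sub_cancel_left]
  ring

theorem reverse_joukowskyLift [Infinite K] {p : K[X]} (hp : p.Monic) (c : K) :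
    (p.joukowskyLift c).reverse = p.joukowskyLift c := by
  refine eq_of_infinite_eval_eq _ _ ((Set.finite_singleton 0).infinite_compl.mono fun z hz => ?_)
  have hz : z ≠ 0 := hz
  let _ : Invertible z⁻¹ := invertibleOfNonzero (inv_ne_zero hz)
  have hrev : (p.joukowskyLift c).reverse.eval z * z⁻¹ ^ (2 * p.natDegree) =
      (z⁻¹) ^ p.natDegree * p.eval (z + z⁻¹ - c) := by
    simpa [invOf_eq_inv, natDegree_joukowskyLift hp, eval_joukowskyLift _ _ (inv_ne_zero hz),
      add_comm] using eval₂_reverse_mul_pow (RingHom.id K) z⁻¹ (p.joukowskyLift c)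
  rw [Set.mem_ofPred_eq, eval_joukowskyLift _ _ hz]
  calc (p.joukowskyLift c).reverse.eval z
      = (p.joukowskyLift c).reverse.eval z * z⁻¹ ^ (2 * p.natDegree) * z ^ (2 * p.natDegree) := by
        rw [mul_assoc, ← mul_pow, inv_mul_cancel₀ hz, one_pow, mul_one]
    _ = z ^ p.natDegree * p.eval (z + z⁻¹ - c) := by
        rw [hrev, two_mul, pow_add, inv_pow]
        field_simp

end Field

end Polynomial

theorem Complex.im_eq_zero_of_add_inv_eq_ofReal {z : ℂ} {t : ℝ} (ht : 2 ≤ |t|)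
    (h : z + z⁻¹ = t) : z.im = 0 := by
  have hz : z ≠ 0 := by
    rintro rfl
    simp only [inv_zero, add_zero, eq_comm, Complex.ofReal_eq_zero] at h
    norm_num [h] at ht
  have hquad : z ^ 2 - t * z + 1 = 0 := by
    rw [← h]
    field_simp
    ring
  have him : (2 * z.re - t) * z.im = 0 := by
    have := congrArg Complex.im hquad
    simp only [pow_two, Complex.sub_im, Complex.add_im, Complex.mul_im, Complex.ofReal_re,
      Complex.ofReal_im, Complex.one_im, Complex.zero_im] at this
    linear_combination this
  have hre : z.re ^ 2 - z.im ^ 2 - t * z.re + 1 = 0 := by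
    simpa [pow_two, Complex.mul_re] using congrArg Complex.re hquad
  by_contra hy
  have hx : z.re = t / 2 := by linarith [(mul_eq_zero.mp him).resolve_right hy]
  have ht2 : 4 ≤ t ^ 2 := by nlinarith [sq_abs t, abs_nonneg t]
  rw [hx] at hre
  exact hy (pow_eq_zero_iff two_ne_zero |>.mp (by nlinarith [sq_nonneg z.im]))

theorem stmt_0_general (α : ℂ) (hint : IsIntegral ℤ α) (d : ℕ)
    (P : Polynomial ℚ) (hP : P = minpoly ℚ α) (hdeg : P.natDegree = d)
    (htotreal : ∀ z : ℂ, Polynomial.aeval z P = 0 → z.im = 0)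
    (L : ℤ) (hL : ∀ z : ℂ, Polynomial.aeval z P = 0 → 2 < (L : ℝ) + z.re)
    (Q : Polynomial ℂ)
    (hQ : Q = ∑ i ∈ Finset.range (d + 1),
      C ((P.map (algebraMap ℚ ℂ)).coeff i) *
        (X ^ 2 + 1 - C (L : ℂ) * X) ^ i * X ^ (d - i)) :
    Q.Monic ∧ Q.natDegree = 2 * d ∧ Q.reverse = Q ∧
    ∀ z : ℂ, Q.eval z = 0 → z.im = 0 := by
  have hmonic : (P.map (algebraMap ℚ ℂ)).Monic := (hP ▸ minpoly.monic hint.tower_top).map _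
  have hdeg' : (P.map (algebraMap ℚ ℂ)).natDegree = d := (natDegree_map _).trans hdeg
  replace hQ : Q = (P.map (algebraMap ℚ ℂ)).joukowskyLift L := by rw [hQ, joukowskyLift, hdeg']
  subst hQ
  refine ⟨hmonic.joukowskyLift _, by rw [natDegree_joukowskyLift hmonic, hdeg'],
    reverse_joukowskyLift hmonic _, fun z hz => ?_⟩
  have hz0 : z ≠ 0 := by
    rintro rfl
    simp [eval_zero_joukowskyLift, hmonic.leadingCoeff] at hz
  rw [eval_joukowskyLift _ _ hz0] at hz
  have hroot : aeval (z + z⁻¹ - L) P = 0 := by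
    rw [aeval_def, ← eval_map]
    exact (mul_eq_zero.mp hz).resolve_left (pow_ne_zero _ hz0)
  have hreal : ((z + z⁻¹ - L).re : ℂ) = z + z⁻¹ - L :=
    Complex.ext (Complex.ofReal_re _) ((Complex.ofReal_im _).trans (htotreal _ hroot).symm)
  refine Complex.im_eq_zero_of_add_inv_eq_ofReal (t := L + (z + z⁻¹ - L).re)
    ((hL _ hroot).le.trans (le_abs_self _)) ?_
  push_cast
  rw [hreal]
  ring

/-- Let `α` be a totally real algebraic integer of degree `d` with minimal
polynomial `P` (over `ℚ`), and let `L` be an integer with `L + αⱼ > 2` for every (real)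
conjugate `αⱼ` of `α`.  Then `Q(X) = X^d · P(X + 1/X − L)`, i.e.
`Q = ∑ᵢ P.coeff i · (X² + 1 − L·X)ⁱ · X^{d−i}`, is a monic palindromic polynomial of
degree `2d` all of whose complex roots are real. -/
theorem stmt_0 (α : ℂ) (hint : IsIntegral ℤ α) (d : ℕ) (hd : 0 < d)
    (P : Polynomial ℚ) (hP : P = minpoly ℚ α) (hdeg : P.natDegree = d)
    (htotreal : ∀ z : ℂ, Polynomial.aeval z P = 0 → z.im = 0)
    (L : ℤ) (hL : ∀ z : ℂ, Polynomial.aeval z P = 0 → 2 < (L : ℝ) + z.re)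
    (Q : Polynomial ℂ)
    (hQ : Q = ∑ i ∈ Finset.range (d + 1),
      C ((P.map (algebraMap ℚ ℂ)).coeff i) *
        (X ^ 2 + 1 - C (L : ℂ) * X) ^ i * X ^ (d - i)) :
    Q.Monic ∧ Q.natDegree = 2 * d ∧ Q.reverse = Q ∧
    ∀ z : ℂ, Q.eval z = 0 → z.im = 0 :=
  stmt_0_general α hint d P hP hdeg htotreal L hL Q hQ
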